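/- Let q ∈ {2, 4, 8}, and let w, e be integers with w ≡ q/2 (mod q), D = e² + 8w, and h_q = gcd(q, w). Then h_q = q/2, and setting e_q = −e − 4q, the quantity w_q = (D − e_q²)/(8·h_q) is an integer equal to 1 + 2(w − q/2)/q − 2e − 4q. -/

import Mathlib

lemma gcd_two_odd (k : ℤ) : Int.gcd 2 (2 * k + 1) = 1 :=
  Int.isCoprime_iff_gcd_eq_one.mp ⟨-k, 1, by ring⟩

theorem stmt_11 (q w e : ℤ) (hq : q ∈ ({2, 4, 8} : Set ℤ))
    (hw : w % q = q / 2) (D : ℤ) (hD : D = e ^ 2 + 8 * w) :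
    (Int.gcd q w : ℤ) = q / 2 ∧
      ∃ wq : ℤ, D - (-e - 4 * q) ^ 2 = 8 * (q / 2) * wq ∧
        wq = 1 + 2 * ((w - q / 2) / q) - 2 * e - 4 * q := by
  subst hD
  rcases hq with hq | hq | hq <;> subst hq
  · obtain ⟨k, hk⟩ : ∃ k : ℤ, w = 2 * k + 1 := ⟨w / 2, by omega⟩
    subst hk
    refine ⟨by simpa using gcd_two_odd k, 1 + 2*k - 2*e - 4*2, by ring, ?_⟩
    norm_num
  · obtain ⟨k, hk⟩ : ∃ k : ℤ, w = 4 * k + 2 := ⟨w / 4, by omega⟩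
    subst hk
    constructor
    · rw [show (4*k+2 : ℤ) = 2*(2*k+1) by ring, show (4:ℤ) = 2*2 by norm_num,
        Int.gcd_mul_left]
      simp [gcd_two_odd k]
    · refine ⟨1 + 2*k - 2*e - 4*4, by ring, ?_⟩
      norm_num
  · obtain ⟨k, hk⟩ : ∃ k : ℤ, w = 8 * k + 4 := ⟨w / 8, by omega⟩
    subst hk
    constructor
    · rw [show (8*k+4 : ℤ) = 4*(2*k+1) by ring, show (8:ℤ) = 4*2 by norm_num,
        Int.gcd_mul_left]
      simp [gcd_two_odd k]
    · refine ⟨1 + 2*k - 2*e - 4*8, by ring, ?_⟩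
      norm_num
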